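/- arXiv:2207.04678 — 4 statements merged into one kernel-verified Lean document; each statement's English description precedes it below -/
import Mathlib

section
/- Expander mixing lemma for regular bipartite graphs: Let Γ be a k-regular bipartite graph with parts X₁, X₂, and let Y_i ⊆ X_i with α_i = |Y_i|/|X_i|. If λ₂ is the second largest eigenvalue of the adjacency matrix of Γ, then |E(Y₁,Y₂)/E(X₁,X₂) - α₁α₂| ≤ (λ₂/k)·√(α₁α₂(1-α₁)(1-α₂)). -/
open Finset

/-- `E(A,B)`: the number of edges of `G` with one endpoint in `A` and the other in `B`,
for `A`, `B` lying in the two sides of a bipartition. -/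
def edgesBetween {V : Type} [Fintype V] [DecidableEq V] (G : SimpleGraph V)
    [DecidableRel G.Adj] (A B : Finset V) : ℕ :=
  ((A ×ˢ B).filter fun p => G.Adj p.1 p.2).card

open Matrix RealInnerProductSpace
set_option linter.unusedSectionVars false
set_option maxHeartbeats 1000000

namespace EML
variable {V : Type} [Fintype V] [DecidableEq V] (G : SimpleGraph V) [DecidableRel G.Adj]

-- symmetric swap
lemma swap (a b : V → ℝ) :
    ∑ v, a v * (G.adjMatrix ℝ *ᵥ b) v = ∑ v, (G.adjMatrix ℝ *ᵥ a) v * b v := by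
  have h1 : ∑ v, a v * (G.adjMatrix ℝ *ᵥ b) v = a ⬝ᵥ (G.adjMatrix ℝ *ᵥ b) := rfl
  have h2 : ∑ v, (G.adjMatrix ℝ *ᵥ a) v * b v = (G.adjMatrix ℝ *ᵥ a) ⬝ᵥ b := rfl
  rw [h1, h2, Matrix.dotProduct_mulVec, ← Matrix.vecMul_transpose,
    (SimpleGraph.isSymm_adjMatrix G).eq]

variable (hA : (G.adjMatrix ℝ).IsHermitian)

-- eigenvalue bound
lemma abs_eig_le (k : ℕ) (hreg : ∀ v, G.degree v = k) (j : V) :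
    |hA.eigenvalues j| ≤ (k : ℝ) := by
  set w : V → ℝ := (WithLp.equiv 2 _) (hA.eigenvectorBasis j) with hw
  have hmul : G.adjMatrix ℝ *ᵥ w = hA.eigenvalues j • w := hA.mulVec_eigenvectorBasis j
  have hwne : w ≠ 0 := by
    intro h0
    have := hA.eigenvectorBasis.orthonormal.ne_zero j
    apply this
    apply (WithLp.equiv 2 _).injective
    exact h0
  obtain ⟨v, -, hv⟩ := Finset.exists_max_image Finset.univ (fun v => |w v|) ⟨j, mem_univ j⟩
  have hv' : ∀ u, |w u| ≤ |w v| := fun u => hv u (mem_univ u)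
  have hvpos : 0 < |w v| := by
    rcases Function.ne_iff.mp hwne with ⟨u, hu⟩
    exact lt_of_lt_of_le (abs_pos.mpr hu) (hv' u)
  have key : |hA.eigenvalues j| * |w v| ≤ (k : ℝ) * |w v| := by
    have h1 : |hA.eigenvalues j * w v| = |(G.adjMatrix ℝ *ᵥ w) v| := by
      rw [hmul]; simp
    rw [← abs_mul, h1, SimpleGraph.adjMatrix_mulVec_apply]
    calc |∑ u ∈ G.neighborFinset v, w u| ≤ ∑ u ∈ G.neighborFinset v, |w u| :=
          Finset.abs_sum_le_sum_abs _ _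
      _ ≤ ∑ u ∈ G.neighborFinset v, |w v| := Finset.sum_le_sum fun u _ => hv' u
      _ = (G.degree v : ℝ) * |w v| := by
          rw [Finset.sum_const, SimpleGraph.card_neighborFinset_eq_degree]; ring
      _ = (k : ℝ) * |w v| := by rw [hreg]
  exact le_of_mul_le_mul_right key hvpos

-- coefficient of eigenvector expansions
lemma coef_eq (w : V → ℝ) (μ : ℝ) (hmul : G.adjMatrix ℝ *ᵥ w = μ • w) (j : V) :
    μ * (∑ v, (WithLp.equiv 2 _) (hA.eigenvectorBasis j) v * w v)
      = hA.eigenvalues j * (∑ v, (WithLp.equiv 2 _) (hA.eigenvectorBasis j) v * w v) := by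
  set bj : V → ℝ := (WithLp.equiv 2 _) (hA.eigenvectorBasis j) with hbj
  have h1 : ∑ v, bj v * (G.adjMatrix ℝ *ᵥ w) v = μ * ∑ v, bj v * w v := by
    rw [hmul]
    simp only [Pi.smul_apply, smul_eq_mul, Finset.mul_sum]
    exact Finset.sum_congr rfl fun v _ => by ring
  have h2 : ∑ v, bj v * (G.adjMatrix ℝ *ᵥ w) v = hA.eigenvalues j * ∑ v, bj v * w v := by
    rw [swap, hbj, WithLp.equiv_apply, hA.mulVec_eigenvectorBasis j]
    simp only [Pi.smul_apply, smul_eq_mul, Finset.mul_sum, hbj, WithLp.equiv_apply]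
    exact Finset.sum_congr rfl fun v _ => by ring
  rw [← h1, h2]


lemma inner_sum (x y : EuclideanSpace ℝ V) : ⟪x, y⟫ = ∑ v, x v * y v := by
  rw [PiLp.inner_apply]; simp
  exact Finset.sum_congr rfl fun _ _ => mul_comm _ _

lemma repr_eq_sum (x : EuclideanSpace ℝ V) (j : V) :
    hA.eigenvectorBasis.repr x j = ∑ v, (WithLp.equiv 2 _) (hA.eigenvectorBasis j) v * x v := by
  rw [hA.eigenvectorBasis.repr_apply_apply, inner_sum]
  rfl

lemma repr_symm_eq_sum (w : V → ℝ) (j : V) :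
    hA.eigenvectorBasis.repr ((WithLp.equiv 2 _).symm w) j
      = ∑ v, (WithLp.equiv 2 _) (hA.eigenvectorBasis j) v * w v :=
  repr_eq_sum G hA _ j

lemma expand_mulVec (z : EuclideanSpace ℝ V) (v : V) :
    (G.adjMatrix ℝ *ᵥ (WithLp.equiv 2 _ z)) v
      = ∑ j, (hA.eigenvalues j * hA.eigenvectorBasis.repr z j) * (hA.eigenvectorBasis j v) := by
  have h1 : (WithLp.equiv 2 ((_ : V) → ℝ)) z
      = ∑ j, hA.eigenvectorBasis.repr z j • (WithLp.equiv 2 _ (hA.eigenvectorBasis j)) := by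
    have := congrArg (WithLp.linearEquiv 2 ℝ (V → ℝ)) (hA.eigenvectorBasis.sum_repr z).symm
    simpa [map_sum] using this
  have h2 : ∀ (f : V → (V → ℝ)), (G.adjMatrix ℝ *ᵥ ∑ j, f j) = ∑ j, G.adjMatrix ℝ *ᵥ f j := by
    intro f
    exact map_sum (Matrix.mulVecLin (G.adjMatrix ℝ)) f Finset.univ
  rw [h1, h2]
  simp only [mulVec_smul, hA.mulVec_eigenvectorBasis, Finset.sum_apply, Pi.smul_apply,
    smul_eq_mul, WithLp.equiv_apply]
  exact Finset.sum_congr rfl fun j _ => by ring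

lemma main_sum (x y : EuclideanSpace ℝ V) :
    ∑ v, ((WithLp.equiv 2 _) x) v * (G.adjMatrix ℝ *ᵥ (WithLp.equiv 2 _ y)) v
      = ∑ j, hA.eigenvalues j * (hA.eigenvectorBasis.repr x j * hA.eigenvectorBasis.repr y j) := by
  have : ∀ v, ((WithLp.equiv 2 _) x) v * (G.adjMatrix ℝ *ᵥ (WithLp.equiv 2 _ y)) v
      = ∑ j, (hA.eigenvalues j * hA.eigenvectorBasis.repr y j) * (hA.eigenvectorBasis j v * x v) := by
    intro v
    rw [expand_mulVec G hA y v]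
    simp only [WithLp.equiv_apply, Finset.mul_sum]
    exact Finset.sum_congr rfl fun j _ => by ring
  rw [Finset.sum_congr rfl fun v _ => this v, Finset.sum_comm]
  refine Finset.sum_congr rfl fun j _ => ?_
  rw [← Finset.mul_sum, repr_eq_sum G hA x j]
  simp only [WithLp.equiv_apply]
  ring

lemma parseval (x y : EuclideanSpace ℝ V) :
    ∑ j, hA.eigenvectorBasis.repr x j * hA.eigenvectorBasis.repr y j = ∑ v, x v * y v := by
  have h1 : ⟪hA.eigenvectorBasis.repr x, hA.eigenvectorBasis.repr y⟫ = ⟪x, y⟫ := by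
    exact hA.eigenvectorBasis.repr.inner_map_map x y
  rw [inner_sum, inner_sum] at h1
  exact h1
variable  (X₁ X₂ : Finset V) (hdisj : Disjoint X₁ X₂) (hcover : X₁ ∪ X₂ = Finset.univ)
  (hbip : ∀ a b, G.Adj a b → (a ∈ X₁ ∧ b ∈ X₂) ∨ (a ∈ X₂ ∧ b ∈ X₁))

def flip2 (X₂ : Finset V) (z : V → ℝ) : V → ℝ := fun v => if v ∈ X₂ then -z v else z v

include hdisj hcover hbip

lemma mem_side (u : V) : (u ∈ X₁ ∧ u ∉ X₂) ∨ (u ∈ X₂ ∧ u ∉ X₁) := by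
  have hu : u ∈ X₁ ∪ X₂ := hcover ▸ Finset.mem_univ u
  rcases Finset.mem_union.mp hu with h | h
  · exact Or.inl ⟨h, fun h2 => (Finset.disjoint_left.mp hdisj) h h2⟩
  · exact Or.inr ⟨h, fun h2 => (Finset.disjoint_left.mp hdisj) h2 h⟩

lemma nbr_side₁ (u : V) (hu : u ∈ X₁) (v : V) (hv : v ∈ G.neighborFinset u) : v ∈ X₂ := by
  have hunx2 : u ∉ X₂ := fun h => (Finset.disjoint_left.mp hdisj) hu h
  rcases hbip u v ((G.mem_neighborFinset u v).mp hv) with ⟨-, h⟩ | ⟨h, -⟩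
  · exact h
  · exact absurd h hunx2

lemma nbr_side₂ (u : V) (hu : u ∈ X₂) (v : V) (hv : v ∈ G.neighborFinset u) : v ∈ X₁ := by
  have hunx1 : u ∉ X₁ := fun h => (Finset.disjoint_left.mp hdisj) h hu
  rcases hbip u v ((G.mem_neighborFinset u v).mp hv) with ⟨h, -⟩ | ⟨-, h⟩
  · exact absurd h hunx1
  · exact h

lemma flip_anticomm (z : V → ℝ) :
    G.adjMatrix ℝ *ᵥ (flip2 X₂ z) = - flip2 X₂ (G.adjMatrix ℝ *ᵥ z) := by
  funext u
  rcases mem_side G X₁ X₂ hdisj hcover hbip u with ⟨h1, h2⟩ | ⟨h2, h1⟩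
  · simp only [SimpleGraph.adjMatrix_mulVec_apply, Pi.neg_apply, flip2, if_neg h2]
    rw [Finset.sum_congr rfl fun v hv => if_pos (nbr_side₁ G X₁ X₂ hdisj hcover hbip u h1 v hv)]
    simp [SimpleGraph.adjMatrix_mulVec_apply]
  · simp only [SimpleGraph.adjMatrix_mulVec_apply, Pi.neg_apply, flip2, if_pos h2]
    rw [Finset.sum_congr rfl fun v hv => if_neg (fun hc =>
      (Finset.disjoint_left.mp hdisj)
        (nbr_side₂ G X₁ X₂ hdisj hcover hbip u h2 v hv) hc)]
    simp [SimpleGraph.adjMatrix_mulVec_apply]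

-- all-ones is k-eigenvector ; psi is (-k)-eigenvector
omit hdisj hcover hbip in
lemma ones_eig (k : ℕ) (hreg : ∀ v, G.degree v = k) :
    G.adjMatrix ℝ *ᵥ (fun _ => (1:ℝ)) = (k:ℝ) • (fun _ => (1:ℝ)) := by
  funext u
  simp [SimpleGraph.adjMatrix_mulVec_apply, hreg u]

omit hdisj hcover hbip in
lemma exists_eig_index (hA : (G.adjMatrix ℝ).IsHermitian) (w : V → ℝ) (hw : w ≠ 0) (μ : ℝ)
    (hmul : G.adjMatrix ℝ *ᵥ w = μ • w) : ∃ j, hA.eigenvalues j = μ := by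
  by_contra hc
  push_neg at hc
  apply hw
  set w' : EuclideanSpace ℝ V := (WithLp.equiv 2 _).symm w with hw'
  have hrep : ∀ j, hA.eigenvectorBasis.repr w' j = 0 := by
    intro j
    have hco := EML.coef_eq G hA w μ hmul j
    rw [← EML.repr_symm_eq_sum G hA w j] at hco
    rcases mul_eq_zero.mp (by linarith [hco] : (μ - hA.eigenvalues j) * hA.eigenvectorBasis.repr w' j = 0) with h | h
    · exact absurd (by linarith : hA.eigenvalues j = μ) (hc j)
    · exact h
  have : w' = 0 := by
    have := hA.eigenvectorBasis.sum_repr w'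
    rw [Finset.sum_congr rfl fun j _ => by rw [hrep j, zero_smul]] at this
    simpa using this.symm
  have : w = 0 := by
    have h2 := congrArg (WithLp.equiv 2 (V → ℝ)) this
    simpa [hw'] using h2
  exact this

omit hdisj hcover hbip in
lemma main_sum' (hA : (G.adjMatrix ℝ).IsHermitian) (x y : V → ℝ) :
    ∑ v, x v * (G.adjMatrix ℝ *ᵥ y) v
      = ∑ j, hA.eigenvalues j * (hA.eigenvectorBasis.repr ((WithLp.equiv 2 _).symm x) j
          * hA.eigenvectorBasis.repr ((WithLp.equiv 2 _).symm y) j) := by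
  have := main_sum G hA ((WithLp.equiv 2 _).symm x) ((WithLp.equiv 2 _).symm y)
  simpa [Equiv.apply_symm_apply] using this

omit hdisj hcover hbip in
lemma parseval_sq (hA : (G.adjMatrix ℝ).IsHermitian) (x : V → ℝ) :
    ∑ j, (hA.eigenvectorBasis.repr ((WithLp.equiv 2 _).symm x) j)^2 = ∑ v, (x v)^2 := by
  have := parseval G hA ((WithLp.equiv 2 _).symm x) ((WithLp.equiv 2 _).symm x)
  simpa [sq, WithLp.equiv_symm_apply, PiLp.toLp_apply] using this

omit hdisj hcover hbip in
lemma trace_eq (hA : (G.adjMatrix ℝ).IsHermitian) : ∑ j, hA.eigenvalues j = 0 := by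
  have h1 := congrArg Matrix.trace hA.spectral_theorem
  rw [Unitary.conjStarAlgAut_apply, Matrix.trace_mul_comm, ← Matrix.mul_assoc,
    Matrix.mem_unitaryGroup_iff'.mp (hA.eigenvectorUnitary).2, Matrix.one_mul,
    SimpleGraph.trace_adjMatrix, Matrix.trace_diagonal] at h1
  simpa using h1.symm

omit hdisj hcover hbip in
lemma flip2_smul (r : ℝ) (z : V → ℝ) : flip2 X₂ (r • z) = r • flip2 X₂ z := by
  funext v; by_cases h : v ∈ X₂ <;> simp [flip2, h]

lemma lam2_nonneg (k : ℕ) (hk : 0 < k) (hreg : ∀ v, G.degree v = k)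
    (hA : (G.adjMatrix ℝ).IsHermitian) (lam₂ : ℝ) (i : V)
    (hmax : ∀ j, hA.eigenvalues j ≤ hA.eigenvalues i)
    (hle : ∀ j, j ≠ i → hA.eigenvalues j ≤ lam₂)
    (hcard : 3 ≤ Fintype.card V) : 0 ≤ lam₂ := by
  -- eigenvalue k exists, so λ i = k
  obtain ⟨j₀, hj₀⟩ := exists_eig_index G hA (fun _ => (1:ℝ))
    (by intro h; simpa using congrFun h i) (k:ℝ) (ones_eig G k hreg)
  have hik : hA.eigenvalues i = k := le_antisymm
    (le_trans (le_abs_self _) (abs_eig_le G hA k hreg i)) (hj₀ ▸ hmax j₀)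
  -- eigenvalue -k exists
  have hpsi : G.adjMatrix ℝ *ᵥ flip2 X₂ (fun _ => (1:ℝ))
      = (-(k:ℝ)) • flip2 X₂ (fun _ => (1:ℝ)) := by
    rw [flip_anticomm G X₁ X₂ hdisj hcover hbip, ones_eig G k hreg, flip2_smul]
    funext v; simp
  have hpsine : flip2 X₂ (fun _ => (1:ℝ)) ≠ 0 := by
    intro h
    have := congrFun h i
    by_cases hi2 : i ∈ X₂ <;> simp [flip2, hi2] at this
  obtain ⟨j₁, hj₁⟩ := exists_eig_index G hA _ hpsine _ hpsi
  have hj₁i : j₁ ≠ i := by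
    intro h
    rw [h, hik] at hj₁
    have : (0:ℝ) < k := by exact_mod_cast hk
    linarith
  -- sum of remaining eigenvalues is 0
  have htr := trace_eq G hA
  have hsplit : ∑ j, hA.eigenvalues j
      = hA.eigenvalues i + (hA.eigenvalues j₁ + ∑ j ∈ (univ.erase i).erase j₁, hA.eigenvalues j) := by
    rw [← Finset.add_sum_erase _ _ (mem_univ i), ← Finset.add_sum_erase _ _
      (Finset.mem_erase.mpr ⟨hj₁i, mem_univ j₁⟩)]
  have hsum0 : ∑ j ∈ (univ.erase i).erase j₁, hA.eigenvalues j = 0 := by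
    rw [htr, hik, hj₁] at hsplit
    linarith
  have hne : ((univ.erase i).erase j₁).Nonempty := by
    rw [← Finset.card_pos]
    have h1 : (univ.erase i).card = Fintype.card V - 1 := by simp
    have h2 : ((univ.erase i).erase j₁).card ≥ (univ.erase i).card - 1 :=
      Finset.pred_card_le_card_erase
    omega
  by_contra hneg
  push_neg at hneg
  have : ∑ j ∈ (univ.erase i).erase j₁, hA.eigenvalues j < ∑ j ∈ (univ.erase i).erase j₁, (0:ℝ) := by
    apply Finset.sum_lt_sum_of_nonempty hne
    intro j hj
    have hji : j ≠ i := (Finset.mem_erase.mp (Finset.mem_of_mem_erase hj)).1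
    exact lt_of_le_of_lt (hle j hji) hneg
  simp [hsum0] at this


lemma spec_bound (k : ℕ) (hk : 0 < k) (hreg : ∀ v, G.degree v = k)
    (hA : (G.adjMatrix ℝ).IsHermitian) (lam₂ : ℝ) (i : V)
    (hmax : ∀ j, hA.eigenvalues j ≤ hA.eigenvalues i)
    (hle : ∀ j, j ≠ i → hA.eigenvalues j ≤ lam₂) (hl0 : 0 ≤ lam₂)
    (x y : V → ℝ) (hx0 : ∀ v, v ∉ X₁ → x v = 0) (hxs : ∑ v, x v = 0)
    (hy0 : ∀ v, v ∉ X₂ → y v = 0) (hys : ∑ v, y v = 0) :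
    |∑ v, x v * (G.adjMatrix ℝ *ᵥ y) v|
      ≤ lam₂ * (Real.sqrt (∑ v, (x v)^2) * Real.sqrt (∑ v, (y v)^2)) := by
  set B := hA.eigenvectorBasis with hB
  set c : V → ℝ := fun j => B.repr ((WithLp.equiv 2 _).symm x) j with hc
  set d : V → ℝ := fun j => B.repr ((WithLp.equiv 2 _).symm y) j with hd
  have hmain : ∑ v, x v * (G.adjMatrix ℝ *ᵥ y) v
      = ∑ j, hA.eigenvalues j * (c j * d j) := main_sum' G hA x y
  -- the per-index bound
  have hperj : ∀ j, |hA.eigenvalues j * (c j * d j)| ≤ lam₂ * (|c j| * |d j|) := by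
    intro j
    rcases le_or_gt (k:ℝ) lam₂ with hkl | hkl
    · rw [abs_mul, abs_mul]
      have := abs_eig_le G hA k hreg j
      have h2 : (0:ℝ) ≤ |c j| * |d j| := mul_nonneg (abs_nonneg _) (abs_nonneg _)
      nlinarith [abs_nonneg (hA.eigenvalues j)]
    · -- lam₂ < k ; first c i = 0 and d i = 0
      have hik : hA.eigenvalues i = k := by
        obtain ⟨j₀, hj₀⟩ := exists_eig_index G hA (fun _ => (1:ℝ))
          (by intro h; simpa using congrFun h j) (k:ℝ) (ones_eig G k hreg)
        exact le_antisymm (le_trans (le_abs_self _) (abs_eig_le G hA k hreg i))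
          (hj₀ ▸ hmax j₀)
      -- coefficients of the all-ones vector
      set b : V → ℝ := fun j' => B.repr ((WithLp.equiv 2 _).symm (fun _ => (1:ℝ))) j' with hb
      have hbzero : ∀ j', j' ≠ i → b j' = 0 := by
        intro j' hj'
        have hco := coef_eq G hA (fun _ => (1:ℝ)) (k:ℝ) (ones_eig G k hreg) j'
        rw [← repr_symm_eq_sum G hA _ j'] at hco
        have hlt : hA.eigenvalues j' < (k:ℝ) := lt_of_le_of_lt (hle j' hj') hkl
        rcases mul_eq_zero.mp (by linarith [hco] :
            ((k:ℝ) - hA.eigenvalues j') * b j' = 0) with h | h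
        · linarith
        · exact h
      have hones : ((WithLp.equiv 2 (V → ℝ)).symm (fun _ => (1:ℝ)))
          = b i • (B i : EuclideanSpace ℝ V) := by
        conv_lhs => rw [← B.sum_repr ((WithLp.equiv 2 (V → ℝ)).symm (fun _ => (1:ℝ)))]
        rw [Finset.sum_eq_single i (fun j' _ hj' => by
            have hz := hbzero j' hj'; simp only [hb] at hz; rw [hz, zero_smul])
          (fun h => absurd (mem_univ i) h)]
      have hbine : b i ≠ 0 := by
        intro h0
        rw [h0, zero_smul] at hones
        have := congrFun (congrArg (WithLp.equiv 2 (V → ℝ)) hones) j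
        simpa using this
      have hBival : ∀ v, (WithLp.equiv 2 (V → ℝ)) (B i) v = (b i)⁻¹ := by
        intro v
        have h2 := congrFun (congrArg (WithLp.equiv 2 (V → ℝ)) hones) v
        simp only [Equiv.apply_symm_apply, WithLp.equiv_apply, WithLp.ofLp_smul, Pi.smul_apply,
          smul_eq_mul] at h2
        exact eq_inv_of_mul_eq_one_left (by rw [WithLp.equiv_apply]; linarith [h2])
      have hci : c i = 0 := by
        have h1 : c i = ∑ v, (WithLp.equiv 2 (V → ℝ)) (B i) v * x v :=
          repr_symm_eq_sum G hA x i
        rw [h1, Finset.sum_congr rfl fun v _ => by rw [hBival v], ← Finset.mul_sum, hxs,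
          mul_zero]
      have hdi : d i = 0 := by
        have h1 : d i = ∑ v, (WithLp.equiv 2 (V → ℝ)) (B i) v * y v :=
          repr_symm_eq_sum G hA y i
        rw [h1, Finset.sum_congr rfl fun v _ => by rw [hBival v], ← Finset.mul_sum, hys,
          mul_zero]
      by_cases hij : j = i
      · subst hij
        rw [hci]
        simp [hl0]
      · -- j ≠ i
        by_cases hcd : c j = 0 ∨ d j = 0
        · rcases hcd with h | h <;> simp [h, abs_mul]
        · push_neg at hcd
          have hup : hA.eigenvalues j ≤ lam₂ := hle j hij
          have hlow : -lam₂ ≤ hA.eigenvalues j := by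
            by_contra hcon
            push_neg at hcon
            -- hcon : hA.eigenvalues j < -lam₂
            set w : V → ℝ := flip2 X₂ ((WithLp.equiv 2 _) (B j)) with hwdef
            have hweig : G.adjMatrix ℝ *ᵥ w = (-(hA.eigenvalues j)) • w := by
              rw [hwdef, flip_anticomm G X₁ X₂ hdisj hcover hbip,
                WithLp.equiv_apply, hA.mulVec_eigenvectorBasis j, flip2_smul]
              funext v; simp [hB]
            set r : V → ℝ := fun j' => B.repr ((WithLp.equiv 2 (V → ℝ)).symm w) j' with hr
            have hrz : ∀ j', j' ≠ i → r j' = 0 := by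
              intro j' hj'
              have hco := coef_eq G hA w (-(hA.eigenvalues j)) hweig j'
              rw [← repr_symm_eq_sum G hA w j'] at hco
              have hj'le : hA.eigenvalues j' ≤ lam₂ := hle j' hj'
              rcases mul_eq_zero.mp (by linarith [hco] :
                  ((-(hA.eigenvalues j)) - hA.eigenvalues j') * r j' = 0) with h | h
              · linarith
              · exact h
            have hw' : (WithLp.equiv 2 (V → ℝ)).symm w = r i • (B i : EuclideanSpace ℝ V) := by
              conv_lhs => rw [← B.sum_repr ((WithLp.equiv 2 (V → ℝ)).symm w)]
              rw [Finset.sum_eq_single i (fun j' _ hj' => by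
                  have hz := hrz j' hj'; simp only [hr] at hz; rw [hz, zero_smul])
                (fun h => absurd (mem_univ i) h)]
            have hwv : ∀ v, w v = r i * (WithLp.equiv 2 (V → ℝ)) (B i) v := by
              intro v
              have h2 := congrFun (congrArg (WithLp.equiv 2 (V → ℝ)) hw') v
              simpa [WithLp.ofLp_smul] using h2
            have hcjz : c j = 0 := by
              have h1 : c j = ∑ v, (WithLp.equiv 2 (V → ℝ)) (B j) v * x v :=
                repr_symm_eq_sum G hA x j
              have h2 : ∀ v, (WithLp.equiv 2 (V → ℝ)) (B j) v * x v = w v * x v := by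
                intro v
                by_cases hv2 : v ∈ X₂
                · have hx : x v = 0 :=
                    hx0 v (fun h1 => Finset.disjoint_left.mp hdisj h1 hv2)
                  rw [hx, mul_zero, mul_zero]
                · rw [hwdef]; simp [flip2, hv2]
              have h3 : ∀ v, w v * x v
                  = r i * ((WithLp.equiv 2 (V → ℝ)) (B i) v * x v) := by
                intro v; rw [hwv v]; ring
              rw [h1, Finset.sum_congr rfl fun v _ => (h2 v).trans (h3 v), ← Finset.mul_sum,
                ← repr_symm_eq_sum G hA x i]
              have : hA.eigenvectorBasis.repr ((WithLp.equiv 2 (V → ℝ)).symm x) i = c i := rfl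
              rw [this, hci, mul_zero]
            exact hcd.1 hcjz
          rw [abs_mul, abs_mul]
          have h3 : |hA.eigenvalues j| ≤ lam₂ := abs_le.mpr ⟨by linarith, hup⟩
          have h2 : (0:ℝ) ≤ |c j| * |d j| := mul_nonneg (abs_nonneg _) (abs_nonneg _)
          nlinarith [abs_nonneg (hA.eigenvalues j)]
  -- assemble
  have h1 : |∑ j, hA.eigenvalues j * (c j * d j)| ≤ lam₂ * ∑ j, |c j| * |d j| := by
    calc |∑ j, hA.eigenvalues j * (c j * d j)| ≤ ∑ j, |hA.eigenvalues j * (c j * d j)| :=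
          Finset.abs_sum_le_sum_abs _ _
      _ ≤ ∑ j, lam₂ * (|c j| * |d j|) := Finset.sum_le_sum fun j _ => hperj j
      _ = lam₂ * ∑ j, |c j| * |d j| := by rw [Finset.mul_sum]
  have h2 : ∑ j, |c j| * |d j| ≤ Real.sqrt (∑ v, (x v)^2) * Real.sqrt (∑ v, (y v)^2) := by
    have hcs := Finset.sum_mul_sq_le_sq_mul_sq Finset.univ (fun j => |c j|) (fun j => |d j|)
    have hps1 : ∑ j, |c j|^2 = ∑ v, (x v)^2 := by
      rw [Finset.sum_congr rfl fun j _ => sq_abs (c j)]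
      exact parseval_sq G hA x
    have hps2 : ∑ j, |d j|^2 = ∑ v, (y v)^2 := by
      rw [Finset.sum_congr rfl fun j _ => sq_abs (d j)]
      exact parseval_sq G hA y
    rw [hps1, hps2] at hcs
    have hnn : (0:ℝ) ≤ ∑ j, |c j| * |d j| :=
      Finset.sum_nonneg fun j _ => mul_nonneg (abs_nonneg _) (abs_nonneg _)
    have := Real.sqrt_le_sqrt hcs
    rw [Real.sqrt_sq hnn, Real.sqrt_mul (Finset.sum_nonneg fun v _ => sq_nonneg (x v))] at this
    exact this
  rw [hmain]
  calc |∑ j, hA.eigenvalues j * (c j * d j)| ≤ lam₂ * ∑ j, |c j| * |d j| := h1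
    _ ≤ lam₂ * (Real.sqrt (∑ v, (x v)^2) * Real.sqrt (∑ v, (y v)^2)) := by
        exact mul_le_mul_of_nonneg_left h2 hl0


def ind (S : Finset V) : V → ℝ := fun v => if v ∈ S then 1 else 0


omit hdisj hcover hbip in
lemma ind_sum (S : Finset V) : ∑ v, ind S v = (S.card : ℝ) := by
  simp [ind]

omit hdisj hcover hbip in
lemma edges_sum (S T : Finset V) :
    edgesBetween G S T = ∑ v ∈ S, ∑ u ∈ T, if G.Adj v u then 1 else 0 := by
  rw [edgesBetween, Finset.card_filter, Finset.sum_product]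

omit hdisj hcover hbip in
lemma e_eq (S T : Finset V) :
    ∑ v, ind S v * (G.adjMatrix ℝ *ᵥ ind T) v = (edgesBetween G S T : ℝ) := by
  have h1 : ∀ v, ind S v * (G.adjMatrix ℝ *ᵥ ind T) v
      = if v ∈ S then (∑ u, if u ∈ T then (if G.Adj v u then (1:ℝ) else 0) else 0) else 0 := by
    intro v
    by_cases hv : v ∈ S
    · simp only [ind, if_pos hv, one_mul, Matrix.mulVec, dotProduct]
      refine Finset.sum_congr rfl fun u _ => ?_
      by_cases hu : u ∈ T
      · simp [hu, SimpleGraph.adjMatrix_apply]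
      · simp [hu]
    · simp [ind, if_neg hv]
  rw [Finset.sum_congr rfl fun v _ => h1 v, Finset.sum_ite_mem, Finset.univ_inter]
  rw [edges_sum, Nat.cast_sum]
  refine Finset.sum_congr rfl fun v _ => ?_
  rw [Finset.sum_ite_mem, Finset.univ_inter, Nat.cast_sum]
  refine Finset.sum_congr rfl fun u _ => by split <;> simp

lemma count₁ (k : ℕ) (hreg : ∀ v, G.degree v = k) (S : Finset V) (hS : S ⊆ X₁) :
    edgesBetween G S X₂ = k * S.card := by
  rw [edges_sum]
  rw [Finset.sum_congr rfl (fun v hv => ?_), Finset.sum_const, smul_eq_mul, mul_comm]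
  have hfil : X₂.filter (fun u => G.Adj v u) = G.neighborFinset v := by
    ext u
    simp only [Finset.mem_filter, SimpleGraph.mem_neighborFinset]
    exact ⟨fun h => h.2, fun h => ⟨nbr_side₁ G X₁ X₂ hdisj hcover hbip v (hS hv) u
      ((G.mem_neighborFinset v u).mpr h), h⟩⟩
  rw [← Finset.card_filter, hfil, SimpleGraph.card_neighborFinset_eq_degree, hreg]

lemma count₂ (k : ℕ) (hreg : ∀ v, G.degree v = k) (T : Finset V) (hT : T ⊆ X₂) :
    edgesBetween G X₁ T = k * T.card := by
  rw [edges_sum, Finset.sum_comm]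
  rw [Finset.sum_congr rfl (fun u hu => ?_), Finset.sum_const, smul_eq_mul, mul_comm]
  have hfil : X₁.filter (fun v => G.Adj v u) = G.neighborFinset u := by
    ext v
    simp only [Finset.mem_filter, SimpleGraph.mem_neighborFinset]
    constructor
    · exact fun h => h.2.symm
    · intro h
      exact ⟨nbr_side₂ G X₁ X₂ hdisj hcover hbip u (hT hu) v
        ((G.mem_neighborFinset u v).mpr h), h.symm⟩
  rw [← Finset.card_filter, hfil, SimpleGraph.card_neighborFinset_eq_degree, hreg]

omit hdisj hcover hbip in
lemma mulVec_lin (p q : V → ℝ) (t : ℝ) (v : V) :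
    (G.adjMatrix ℝ *ᵥ (fun u => p u - t * q u)) v
      = (G.adjMatrix ℝ *ᵥ p) v - t * (G.adjMatrix ℝ *ᵥ q) v := by
  simp only [Matrix.mulVec, dotProduct]
  rw [Finset.mul_sum, ← Finset.sum_sub_distrib]
  exact Finset.sum_congr rfl fun u _ => by ring

end EML

/-- Expander mixing lemma for regular bipartite graphs: if `Γ` is `k`-regular bipartite with
parts `X₁, X₂`, `Y_i ⊆ X_i` have densities `α_i = |Y_i|/|X_i|`, and `λ₂` is the second largest
eigenvalue of the adjacency matrix, then
`|E(Y₁,Y₂)/E(X₁,X₂) − α₁α₂| ≤ (λ₂/k)·√(α₁α₂(1−α₁)(1−α₂))`. -/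
theorem stmt8 {V : Type} [Fintype V] [DecidableEq V] (G : SimpleGraph V) [DecidableRel G.Adj]
    (X₁ X₂ : Finset V) (hdisj : Disjoint X₁ X₂) (hcover : X₁ ∪ X₂ = Finset.univ)
    (hbip : ∀ a b, G.Adj a b → (a ∈ X₁ ∧ b ∈ X₂) ∨ (a ∈ X₂ ∧ b ∈ X₁))
    (k : ℕ) (hk : 0 < k) (hreg : ∀ v, G.degree v = k)
    (Y₁ Y₂ : Finset V) (hY₁ : Y₁ ⊆ X₁) (hY₂ : Y₂ ⊆ X₂)
    (α₁ α₂ : ℝ) (hα₁ : α₁ = (Y₁.card : ℝ) / X₁.card) (hα₂ : α₂ = (Y₂.card : ℝ) / X₂.card)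
    (hA : (G.adjMatrix ℝ).IsHermitian) (lam₂ : ℝ)
    (hlam₂ : ∃ i : V, (∀ j, hA.eigenvalues j ≤ hA.eigenvalues i) ∧
      (∀ j, j ≠ i → hA.eigenvalues j ≤ lam₂) ∧ (∃ j, j ≠ i ∧ hA.eigenvalues j = lam₂)) :
    |(edgesBetween G Y₁ Y₂ : ℝ) / (edgesBetween G X₁ X₂ : ℝ) - α₁ * α₂|
      ≤ (lam₂ / k) * Real.sqrt (α₁ * α₂ * (1 - α₁) * (1 - α₂)) := by
  classical
  obtain ⟨i, hmax, hle, j₀, hj₀ne, hj₀eq⟩ := hlam₂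
  have hE12 : edgesBetween G X₁ X₂ = k * X₁.card :=
    EML.count₁ G X₁ X₂ hdisj hcover hbip k hreg X₁ (subset_refl X₁)
  have hE12' : edgesBetween G X₁ X₂ = k * X₂.card :=
    EML.count₂ G X₁ X₂ hdisj hcover hbip k hreg X₂ (subset_refl X₂)
  have hcards : X₂.card = X₁.card :=
    (Nat.eq_of_mul_eq_mul_left hk (hE12.symm.trans hE12')).symm
  set n : ℕ := X₁.card with hn
  have hnpos : 0 < n := by
    by_contra h
    push_neg at h
    have hX1 : X₁ = ∅ := Finset.card_eq_zero.mp (by omega)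
    have hi2 : i ∈ X₂ := by
      rcases EML.mem_side G X₁ X₂ hdisj hcover hbip i with ⟨h1, -⟩ | ⟨h1, -⟩
      · rw [hX1] at h1; exact absurd h1 (Finset.notMem_empty i)
      · exact h1
    have hdeg : 0 < (G.neighborFinset i).card := by
      rw [SimpleGraph.card_neighborFinset_eq_degree, hreg]; exact hk
    obtain ⟨u, hu⟩ := Finset.card_pos.mp hdeg
    have := EML.nbr_side₂ G X₁ X₂ hdisj hcover hbip i hi2 u hu
    rw [hX1] at this; exact absurd this (Finset.notMem_empty u)
  have hnR : (0:ℝ) < (n:ℝ) := by exact_mod_cast hnpos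
  have hX2n : (X₂.card : ℝ) = (n:ℝ) := by rw [hcards]
  have hY1n : (Y₁.card : ℝ) = α₁ * n := by rw [hα₁]; field_simp
  have hY2n : (Y₂.card : ℝ) = α₂ * n := by rw [hα₂, hX2n]; field_simp
  have hα₁0 : 0 ≤ α₁ := by rw [hα₁]; positivity
  have hα₂0 : 0 ≤ α₂ := by rw [hα₂]; exact div_nonneg (Nat.cast_nonneg _) (Nat.cast_nonneg _)
  have hα₁1 : α₁ ≤ 1 := by
    rw [hα₁, div_le_one hnR]
    exact_mod_cast Finset.card_le_card hY₁
  have hα₂1 : α₂ ≤ 1 := by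
    rw [hα₂, hX2n, div_le_one hnR]
    have := Finset.card_le_card hY₂
    have h2 : Y₂.card ≤ n := hcards ▸ this
    exact_mod_cast h2
  set f : V → ℝ := fun v => EML.ind Y₁ v - α₁ * EML.ind X₁ v with hf
  set g : V → ℝ := fun v => EML.ind Y₂ v - α₂ * EML.ind X₂ v with hg
  have hfsupp : ∀ v, v ∉ X₁ → f v = 0 := by
    intro v hv
    have hvY : v ∉ Y₁ := fun h => hv (hY₁ h)
    simp [hf, EML.ind, if_neg hvY, if_neg hv]
  have hgsupp : ∀ v, v ∉ X₂ → g v = 0 := by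
    intro v hv
    have hvY : v ∉ Y₂ := fun h => hv (hY₂ h)
    simp [hg, EML.ind, if_neg hvY, if_neg hv]
  have hfsum : ∑ v, f v = 0 := by
    simp only [hf]
    rw [Finset.sum_sub_distrib, ← Finset.mul_sum, EML.ind_sum, EML.ind_sum, hY1n]
    ring
  have hgsum : ∑ v, g v = 0 := by
    simp only [hg]
    rw [Finset.sum_sub_distrib, ← Finset.mul_sum, EML.ind_sum, EML.ind_sum, hY2n, hX2n]
    ring
  have hfsq : ∑ v, (f v)^2 = n * (α₁ * (1 - α₁)) := by
    have hterm : ∀ v, (f v)^2 = (1 - 2*α₁) * EML.ind Y₁ v + α₁^2 * EML.ind X₁ v := by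
      intro v
      by_cases hvY : v ∈ Y₁
      · have hvX : v ∈ X₁ := hY₁ hvY
        simp only [hf, EML.ind, if_pos hvY, if_pos hvX]
        ring
      · by_cases hvX : v ∈ X₁ <;>
          simp only [hf, EML.ind, if_neg hvY, if_pos, if_neg, hvX, if_true, if_false] <;> ring
    rw [Finset.sum_congr rfl fun v _ => hterm v, Finset.sum_add_distrib, ← Finset.mul_sum,
      ← Finset.mul_sum, EML.ind_sum, EML.ind_sum, hY1n]
    ring
  have hgsq : ∑ v, (g v)^2 =(n:ℝ) * (α₂ * (1 - α₂)) := by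
    have hterm : ∀ v, (g v)^2 = (1 - 2*α₂) * EML.ind Y₂ v + α₂^2 * EML.ind X₂ v := by
      intro v
      by_cases hvY : v ∈ Y₂
      · have hvX : v ∈ X₂ := hY₂ hvY
        simp only [hg, EML.ind, if_pos hvY, if_pos hvX]
        ring
      · by_cases hvX : v ∈ X₂ <;>
          simp only [hg, EML.ind, if_neg hvY, if_pos, if_neg, hvX, if_true, if_false] <;> ring
    rw [Finset.sum_congr rfl fun v _ => hterm v, Finset.sum_add_distrib, ← Finset.mul_sum,
      ← Finset.mul_sum, EML.ind_sum, EML.ind_sum, hY2n, hX2n]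
    ring
  have hid : ∑ v, f v * (G.adjMatrix ℝ *ᵥ g) v
      = (edgesBetween G Y₁ Y₂ : ℝ) - α₁ * α₂ * ((k:ℝ) * n) := by
    have hterm : ∀ v, f v * (G.adjMatrix ℝ *ᵥ g) v
        = EML.ind Y₁ v * (G.adjMatrix ℝ *ᵥ EML.ind Y₂) v
          - α₂ * (EML.ind Y₁ v * (G.adjMatrix ℝ *ᵥ EML.ind X₂) v)
          - α₁ * (EML.ind X₁ v * (G.adjMatrix ℝ *ᵥ EML.ind Y₂) v)
          + α₁ * α₂ * (EML.ind X₁ v * (G.adjMatrix ℝ *ᵥ EML.ind X₂) v) := by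
      intro v
      have hg' : (G.adjMatrix ℝ *ᵥ g) v
          = (G.adjMatrix ℝ *ᵥ EML.ind Y₂) v - α₂ * (G.adjMatrix ℝ *ᵥ EML.ind X₂) v :=
        EML.mulVec_lin G (EML.ind Y₂) (EML.ind X₂) α₂ v
      rw [hg']
      simp only [hf]
      ring
    rw [Finset.sum_congr rfl fun v _ => hterm v, Finset.sum_add_distrib,
      Finset.sum_sub_distrib, Finset.sum_sub_distrib, ← Finset.mul_sum, ← Finset.mul_sum,
      ← Finset.mul_sum, EML.e_eq, EML.e_eq, EML.e_eq, EML.e_eq]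
    have h1 : edgesBetween G Y₁ X₂ = k * Y₁.card :=
      EML.count₁ G X₁ X₂ hdisj hcover hbip k hreg Y₁ hY₁
    have h2 : edgesBetween G X₁ Y₂ = k * Y₂.card :=
      EML.count₂ G X₁ X₂ hdisj hcover hbip k hreg Y₂ hY₂
    rw [h1, h2, hE12]
    push_cast
    rw [hY1n, hY2n]
    ring
  have hEX : (edgesBetween G X₁ X₂ : ℝ) = (k:ℝ) * n := by
    rw [hE12]; push_cast; ring
  have hkR : (0:ℝ) < (k:ℝ) := by exact_mod_cast hk
  have hknR : (0:ℝ) < (k:ℝ) * n := mul_pos hkR hnR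
  have hLHS : |(edgesBetween G Y₁ Y₂ : ℝ) / (edgesBetween G X₁ X₂ : ℝ) - α₁*α₂|
      = |∑ v, f v * (G.adjMatrix ℝ *ᵥ g) v| / ((k:ℝ)*n) := by
    rw [hid, hEX]
    rw [show (edgesBetween G Y₁ Y₂ : ℝ) / ((k:ℝ)*(n:ℝ)) - α₁*α₂
        = ((edgesBetween G Y₁ Y₂ : ℝ) - α₁*α₂*((k:ℝ)*(n:ℝ))) / ((k:ℝ)*(n:ℝ)) from by
      field_simp]
    rw [abs_div, abs_of_pos hknR]
  rw [hLHS, div_le_iff₀ hknR]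
  by_cases hl : 0 ≤ lam₂
  · have hspec := EML.spec_bound G X₁ X₂ hdisj hcover hbip k hk hreg hA lam₂ i hmax hle hl
      f g hfsupp hfsum hgsupp hgsum
    rw [hfsq, hgsq] at hspec
    have ha : 0 ≤ α₁ * (1 - α₁) := mul_nonneg hα₁0 (by linarith)
    have hb : 0 ≤ α₂ * (1 - α₂) := mul_nonneg hα₂0 (by linarith)
    have hsqrt : Real.sqrt ((n:ℝ) * (α₁*(1-α₁))) * Real.sqrt ((n:ℝ) * (α₂*(1-α₂)))
        = (n:ℝ) * Real.sqrt (α₁*α₂*(1-α₁)*(1-α₂)) := by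
      rw [← Real.sqrt_mul (mul_nonneg hnR.le ha)]
      have hre : (n:ℝ) * (α₁*(1-α₁)) * ((n:ℝ) * (α₂*(1-α₂)))
          = (n:ℝ)^2 * (α₁*α₂*(1-α₁)*(1-α₂)) := by ring
      rw [hre, Real.sqrt_mul (sq_nonneg _), Real.sqrt_sq hnR.le]
    calc |∑ v, f v * (G.adjMatrix ℝ *ᵥ g) v|
        ≤ lam₂ * (Real.sqrt ((n:ℝ) * (α₁*(1-α₁))) * Real.sqrt ((n:ℝ) * (α₂*(1-α₂)))) := hspec
      _ = lam₂ / k * Real.sqrt (α₁*α₂*(1-α₁)*(1-α₂)) * ((k:ℝ)*n) := by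
          rw [hsqrt]; field_simp
  · push_neg at hl
    have hn1 : n = 1 := by
      by_contra hne
      have h2n : 2 ≤ n := by omega
      have hcardV : Fintype.card V = X₁.card + X₂.card := by
        rw [← Finset.card_univ, ← hcover, Finset.card_union_of_disjoint hdisj]
      have hc3 : 3 ≤ Fintype.card V := by omega
      exact absurd (EML.lam2_nonneg G X₁ X₂ hdisj hcover hbip k hk hreg hA lam₂ i hmax hle hc3)
        (not_le.mpr hl)
    have hα1z : α₁ * (1 - α₁) = 0 := by
      have hY1le : Y₁.card ≤ 1 := by
        have := Finset.card_le_card hY₁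
        omega
      rcases Nat.le_one_iff_eq_zero_or_eq_one.mp hY1le with h | h
      · have : α₁ = 0 := by rw [hα₁, h]; simp
        rw [this]; ring
      · have : α₁ = 1 := by rw [hα₁, h, hn1]; norm_num
        rw [this]; ring
    have hfzero : ∀ v, f v = 0 := by
      have hsz : ∑ v, (f v)^2 = 0 := by rw [hfsq, hα1z]; ring
      intro v
      have := (Finset.sum_eq_zero_iff_of_nonneg (fun u _ => sq_nonneg (f u))).mp hsz v
        (mem_univ v)
      exact pow_eq_zero_iff (two_ne_zero) |>.mp this
    have hzero : ∑ v, f v * (G.adjMatrix ℝ *ᵥ g) v = 0 :=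
      Finset.sum_eq_zero fun v _ => by rw [hfzero v, zero_mul]
    rw [hzero, abs_zero]
    have hP : α₁*α₂*(1-α₁)*(1-α₂) = (α₁*(1-α₁)) * (α₂*(1-α₂)) := by ring
    rw [hP, hα1z, zero_mul, Real.sqrt_zero, mul_zero, zero_mul]
end

section
/- For every real q ≥ 2, ∏_{i=1}^∞ (1 - q^{-i}) > 1 - q^{-1} - q^{-2} + q^{-5}. -/
/-!
With `x = q⁻¹`, keep the first three factors and bound the tail `∏_{i ≥ 4} (1 - xⁱ)` from
below by the Weierstrass product inequality `∏ (1 - aᵢ) ≥ 1 - ∑ aᵢ`, i.e. by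
`1 - x⁴ / (1 - x)`. The resulting lower bound `(1 - x)(1 - x²)(1 - x³)(1 - x⁴ / (1 - x))`
expands to `1 - x - x² + x⁵ + x⁷ (1 - x²)`, which beats the claim for every `0 < x < 1`.
-/

open Finset

theorem Finset.one_sub_sum_le_prod_one_sub {ι : Type*} (s : Finset ι) {f : ι → ℝ}
    (h0 : ∀ i ∈ s, 0 ≤ f i) (h1 : ∀ i ∈ s, f i ≤ 1) :
    1 - ∑ i ∈ s, f i ≤ ∏ i ∈ s, (1 - f i) := by
  classical
  induction s using Finset.induction_on with
  | empty => simp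
  | insert a s ha ih =>
    rw [prod_insert ha, sum_insert ha]
    have hprod := ih (fun i hi => h0 i (mem_insert_of_mem hi))
      (fun i hi => h1 i (mem_insert_of_mem hi))
    have hs : 0 ≤ ∑ i ∈ s, f i := sum_nonneg fun i hi => h0 i (mem_insert_of_mem hi)
    nlinarith [h0 a (mem_insert_self a s), h1 a (mem_insert_self a s)]

theorem Real.multipliable_one_sub_of_summable {ι : Type*} {f : ι → ℝ} (hf : Summable f) :
    Multipliable fun i => 1 - f i := by
  simpa [← sub_eq_add_neg] using Real.multipliable_one_add_of_summable hf.neg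

theorem one_sub_tsum_le_tprod_one_sub {ι : Type*} {f : ι → ℝ} (hf : Summable f)
    (h0 : ∀ i, 0 ≤ f i) (h1 : ∀ i, f i ≤ 1) :
    1 - ∑' i, f i ≤ ∏' i, (1 - f i) := by
  refine ge_of_tendsto (Real.multipliable_one_sub_of_summable hf).hasProd
    (Filter.Eventually.of_forall fun s => ?_)
  calc 1 - ∑' i, f i ≤ 1 - ∑ i ∈ s, f i := by linarith [hf.sum_le_tsum s fun i _ => h0 i]
    _ ≤ ∏ i ∈ s, (1 - f i) := s.one_sub_sum_le_prod_one_sub (fun i _ => h0 i) fun i _ => h1 i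

theorem prod_range_mul_one_sub_le_tprod_one_sub_pow {x : ℝ} (hx0 : 0 ≤ x) (hx1 : x < 1)
    (k : ℕ) :
    (∏ i ∈ range k, (1 - x ^ (i + 1))) * (1 - x ^ (k + 1) / (1 - x)) ≤
      ∏' i : ℕ, (1 - x ^ (i + 1)) := by
  have hshift : ∀ i : ℕ, x ^ (i + k + 1) = x ^ (k + 1) * x ^ i := fun i => by ring
  have hgeom : Summable fun i : ℕ => x ^ i := summable_geometric_of_lt_one hx0 hx1
  have htail : Summable fun i : ℕ => x ^ (i + k + 1) := by
    simpa only [hshift] using hgeom.mul_left (x ^ (k + 1))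
  have htail_sum : ∑' i : ℕ, x ^ (i + k + 1) = x ^ (k + 1) / (1 - x) := by
    rw [tsum_congr hshift, tsum_mul_left, tsum_geometric_of_lt_one hx0 hx1, div_eq_mul_inv]
  rw [← Multipliable.prod_mul_tprod_nat_mul' (f := fun i => 1 - x ^ (i + 1))
    (Real.multipliable_one_sub_of_summable htail), ← htail_sum]
  refine mul_le_mul_of_nonneg_left ?_
    (prod_nonneg fun i _ => sub_nonneg.2 (pow_le_one₀ hx0 hx1.le))
  exact one_sub_tsum_le_tprod_one_sub htail (fun i => pow_nonneg hx0 _)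
    fun i => pow_le_one₀ hx0 hx1.le

/-- For every real `q ≥ 2`, `∏_{i=1}^∞ (1 - q^{-i}) > 1 - q⁻¹ - q⁻² + q⁻⁵`. -/
theorem stmt12 (q : ℝ) (hq : 2 ≤ q) :
    1 - q⁻¹ - (q ^ 2)⁻¹ + (q ^ 5)⁻¹ < ∏' i : ℕ, (1 - (q ^ (i + 1))⁻¹) := by
  simp only [← inv_pow]
  set x := q⁻¹
  have hx0 : 0 < x := inv_pos.2 (by linarith)
  have hx1 : x < 1 := inv_lt_one_of_one_lt₀ (by linarith)
  have hbound := prod_range_mul_one_sub_le_tprod_one_sub_pow hx0.le hx1 3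
  have hexpand : (∏ i ∈ range 3, (1 - x ^ (i + 1))) * (1 - x ^ (3 + 1) / (1 - x)) =
      1 - x - x ^ 2 + x ^ 5 + x ^ 7 * (1 - x ^ 2) := by
    simp only [prod_range_succ, prod_range_zero]
    field_simp [(sub_pos.2 hx1).ne']
    ring
  have hgap : 0 < x ^ 7 * (1 - x ^ 2) :=
    mul_pos (pow_pos hx0 7) (sub_pos.2 (pow_lt_one₀ hx0.le hx1 two_ne_zero))
  linarith
end

section
/- For all real q ≥ 2 and all integers e₂ ≥ 2, the products A = ∏_{i=1}^{e₂} (1 - (-q)^{-i}) and B(e₁) = ∏_{i=1}^{e₂} (1 - (-q)^{-e₁-i}) for any e₁ ≥ e₂ satisfy A ≤ 1 + q^{-1} and B(e₁) ≥ (1 - q^{-4})(1 - q^{-6}); hence their ratio is at most (1 + q^{-1})/((1 - q^{-4})(1 - q^{-6})). -/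
/-!
Put `t = (-q)⁻¹ ∈ [-1/2, 0)`, so both products are `q`-Pochhammer symbols
`(a; t)ₙ = ∏_{j<n} (1 - a tʲ)` with `a = t` and `a = t^(e₁+1)`. Grouping the factors in
consecutive pairs `(1 - a)(1 - a t)`, one sees that `(a; t)ₙ ≤ 1` when `0 ≤ a ≤ 1` and
`(a; t)ₙ ≥ 1` when `-1 ≤ a ≤ 0`, the latter because `t ≥ -1/2`. Peeling off the first factor
`1 - a` then bounds `A = (t; t)ₙ` by `1 - t = 1 + q⁻¹`, and `B` from below by `1` or by
`1 - t^(e₁+1) ≥ 1 - q⁻⁴`, according to the parity of `e₁ + 1 ≥ 3`.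
-/

open Finset

variable {R : Type*}

def qPochhammer [CommRing R] (a t : R) (n : ℕ) : R :=
  ∏ j ∈ range n, (1 - a * t ^ j)

namespace qPochhammer

section CommRing

variable [CommRing R] (a t : R)

@[simp]
theorem zero : qPochhammer a t 0 = 1 := by
  simp [qPochhammer]

theorem succ (n : ℕ) : qPochhammer a t (n + 1) = (1 - a) * qPochhammer (a * t) t n := by
  simp only [qPochhammer, prod_range_succ', pow_zero, mul_one, pow_succ, mul_assoc,
    mul_comm t]
  ring

theorem prod_Icc_one_sub_pow (k n : ℕ) :
    ∏ i ∈ Icc 1 n, (1 - t ^ (k + i)) = qPochhammer (t ^ (k + 1)) t n := by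
  rw [qPochhammer, ← Ico_add_one_right_eq_Icc, prod_Ico_eq_prod_range, Nat.add_sub_cancel]
  refine prod_congr rfl fun j _ => ?_
  rw [← pow_add, add_assoc]

end CommRing

section Ordered

variable [CommRing R] [LinearOrder R] [IsStrictOrderedRing R] {a t : R}

theorem le_one (ha₀ : 0 ≤ a) (ha₁ : a ≤ 1) (ht₁ : -1 ≤ t) (ht₀ : t ≤ 0) (n : ℕ) :
    qPochhammer a t n ≤ 1 := by
  induction n using Nat.twoStepInduction generalizing a with
  | zero => simp
  | one => simpa [qPochhammer]
  | more n ih _ =>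
    have htt : t * t ≤ 1 := by nlinarith
    have hat : a * t ≤ 0 := mul_nonpos_of_nonneg_of_nonpos ha₀ ht₀
    have hpair₀ : 0 ≤ (1 - a) * (1 - a * t) := mul_nonneg (by linarith) (by linarith)
    -- `(1 - a)(1 - a t) = 1 - a (1 + t - a t)` with `1 + t - a t ≥ 0`
    have hpair₁ : (1 - a) * (1 - a * t) ≤ 1 := by nlinarith
    rw [succ, succ, ← mul_assoc, mul_assoc a, mul_comm]
    exact mul_le_one₀ (ih (by nlinarith) (by nlinarith)) hpair₀ hpair₁

theorem one_le (ha₁ : -1 ≤ a) (ha₀ : a ≤ 0) (ht₁ : -1 ≤ 2 * t) (ht₀ : t ≤ 0) (n : ℕ) :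
    1 ≤ qPochhammer a t n := by
  induction n using Nat.twoStepInduction generalizing a with
  | zero => simp
  | one => simpa [qPochhammer]
  | more n ih _ =>
    -- `(1 - a)(1 - a t) = 1 - a (1 + t - a t)` with `a ≤ 0` and `1 + t - a t ≥ 1 + 2 t ≥ 0`
    have hpair : 1 ≤ (1 - a) * (1 - a * t) := by
      nlinarith [mul_nonneg (neg_nonneg.2 ha₀) (neg_nonneg.2 ht₀)]
    have htt : t * t ≤ 1 := by nlinarith
    rw [succ, succ, ← mul_assoc, mul_assoc a]
    exact one_le_mul_of_one_le_of_one_le hpair (ih (by nlinarith) (by nlinarith))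

theorem le_one_sub (ha₁ : -1 ≤ a) (ha₀ : a ≤ 0) (ht₁ : -1 ≤ t) (ht₀ : t ≤ 0) (n : ℕ) :
    qPochhammer a t n ≤ 1 - a := by
  cases n with
  | zero => simpa using ha₀
  | succ n =>
    rw [succ]
    exact mul_le_of_le_one_right (by linarith) (le_one (by nlinarith) (by nlinarith) ht₁ ht₀ n)

theorem one_sub_le (ha₀ : 0 ≤ a) (ha₁ : a ≤ 1) (ht₁ : -1 ≤ 2 * t) (ht₀ : t ≤ 0) (n : ℕ) :
    1 - a ≤ qPochhammer a t n := by
  cases n with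
  | zero => simpa using ha₀
  | succ n =>
    rw [succ]
    exact le_mul_of_one_le_right (by linarith) (one_le (by nlinarith) (by nlinarith) ht₁ ht₀ n)

theorem one_sub_pow_four_le (ht₁ : -1 ≤ 2 * t) (ht₀ : t ≤ 0) {k : ℕ} (hk : 3 ≤ k) (n : ℕ) :
    1 - t ^ 4 ≤ qPochhammer (t ^ k) t n := by
  have ht : |t| ≤ 1 := by rw [abs_le]; constructor <;> linarith
  have htk : |t ^ k| ≤ 1 := by rw [abs_pow]; exact pow_le_one₀ (abs_nonneg t) ht
  rcases Nat.even_or_odd k with hev | hodd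
  · have hk4 : 4 ≤ k := by obtain ⟨r, rfl⟩ := hev; omega
    have hle : t ^ k ≤ t ^ 4 := by
      rw [← hev.pow_abs, ← (show Even 4 by decide).pow_abs]
      exact pow_le_pow_of_le_one (abs_nonneg t) ht hk4
    exact (sub_le_sub_left hle 1).trans
      (one_sub_le (hev.pow_nonneg t) ((le_abs_self _).trans htk) ht₁ ht₀ n)
  · calc 1 - t ^ 4 ≤ 1 := sub_le_self _ (by positivity)
      _ ≤ qPochhammer (t ^ k) t n := one_le (abs_le.1 htk).1 (hodd.pow_nonpos ht₀) ht₁ ht₀ n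

end Ordered

end qPochhammer

/-- For real `q ≥ 2` and integers `e₁ ≥ e₂ ≥ 2`, the products
`A = ∏_{i=1}^{e₂} (1 − (−q)^{-i})` and `B = ∏_{i=1}^{e₂} (1 − (−q)^{-e₁-i})` satisfy
`A ≤ 1 + q⁻¹` and `B ≥ (1 − q⁻⁴)(1 − q⁻⁶)`; hence
`A/B ≤ (1 + q⁻¹)/((1 − q⁻⁴)(1 − q⁻⁶))`. -/
theorem stmt17 (q : ℝ) (hq : 2 ≤ q) (e₁ e₂ : ℕ) (h₂ : 2 ≤ e₂) (h₂₁ : e₂ ≤ e₁) :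
    (∏ i ∈ Finset.Icc 1 e₂, (1 - ((-q) ^ i)⁻¹) ≤ 1 + q⁻¹) ∧
    ((1 - (q ^ 4)⁻¹) * (1 - (q ^ 6)⁻¹) ≤ ∏ i ∈ Finset.Icc 1 e₂, (1 - ((-q) ^ (e₁ + i))⁻¹)) ∧
    (∏ i ∈ Finset.Icc 1 e₂, (1 - ((-q) ^ i)⁻¹))
        / (∏ i ∈ Finset.Icc 1 e₂, (1 - ((-q) ^ (e₁ + i))⁻¹))
      ≤ (1 + q⁻¹) / ((1 - (q ^ 4)⁻¹) * (1 - (q ^ 6)⁻¹)) := by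
  set t : ℝ := (-q)⁻¹ with ht
  have hqt : q⁻¹ = -t := by rw [ht, inv_neg, neg_neg]
  have ht₀ : t ≤ 0 := by rw [ht, inv_neg]; exact neg_nonpos.2 (by positivity)
  have ht₁ : -1 ≤ 2 * t := by
    rw [ht, inv_neg]; linarith [inv_anti₀ (by norm_num : (0 : ℝ) < 2) hq]
  have hpow (m : ℕ) (hm : Even m) : (q ^ m)⁻¹ = t ^ m := by rw [ht, inv_pow, hm.neg_pow]
  have hA : ∏ i ∈ Icc 1 e₂, (1 - ((-q) ^ i)⁻¹) = qPochhammer t t e₂ := by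
    simpa [← inv_pow, ← ht] using qPochhammer.prod_Icc_one_sub_pow t 0 e₂
  have hB : ∏ i ∈ Icc 1 e₂, (1 - ((-q) ^ (e₁ + i))⁻¹) = qPochhammer (t ^ (e₁ + 1)) t e₂ := by
    simpa [← inv_pow, ← ht] using qPochhammer.prod_Icc_one_sub_pow t e₁ e₂
  rw [hA, hB, hqt, hpow 4 (by decide), hpow 6 (by decide)]
  have hA_le : qPochhammer t t e₂ ≤ 1 - t :=
    qPochhammer.le_one_sub (by linarith) ht₀ (by linarith) ht₀ e₂
  have habs : |t| < 1 := by rw [abs_lt]; constructor <;> linarith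
  have hlt (m : ℕ) (hm : Even m) (hm₀ : m ≠ 0) : t ^ m < 1 := by
    rw [← hm.pow_abs]; exact pow_lt_one₀ (abs_nonneg t) habs hm₀
  have hB_ge : (1 - t ^ 4) * (1 - t ^ 6) ≤ qPochhammer (t ^ (e₁ + 1)) t e₂ :=
    calc (1 - t ^ 4) * (1 - t ^ 6) ≤ 1 - t ^ 4 :=
          mul_le_of_le_one_right (by linarith [hlt 4 (by decide) (by decide)])
            (sub_le_self _ (by positivity))
      _ ≤ _ := qPochhammer.one_sub_pow_four_le ht₁ ht₀ (by omega) e₂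
  have hbound_pos : 0 < (1 - t ^ 4) * (1 - t ^ 6) := by
    nlinarith [hlt 4 (by decide) (by decide), hlt 6 (by decide) (by decide)]
  rw [← sub_eq_add_neg]
  exact ⟨hA_le, hB_ge, div_le_div₀ (by linarith) hA_le hbound_pos hB_ge⟩
end

section
/- Let V be a nondegenerate orthogonal space of type ε ∈ {±1} and dimension 2m₁+2m₂ over F_q, and let Y₁ be the set of nondegenerate 2m₁-subspaces of type σ₁ ∈ {±1}. Then |Y₁| = |GO^ε_{2m₁+2m₂}(q)| / (|GO^{σ₁}_{2m₁}(q)|·|GO^{εσ₁}_{2m₂}(q)|), and this equals q^{4m₁m₂}·((1+σ₁q^{-m₁})(1+εσ₁q^{-m₂})/(2(1+εq^{-m₁-m₂})))·(ω_{q²}(m₁+m₂)/(ω_{q²}(m₁)ω_{q²}(m₂))), where ω_{q²}(m) = ∏_{i=1}^m (1 - q^{-2i}). -/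
open Finset

/-- The order `|GO^σ_{2m}(q)| = 2 q^{m(m-1)} (q^m − σ) ∏_{i=1}^{m-1}(q^{2i}−1)`,
taken as given. -/
noncomputable def goOrder (q : ℕ) (m : ℕ) (σ : ℚ) : ℚ :=
  2 * (q : ℚ) ^ (m * (m - 1)) * ((q : ℚ) ^ m - σ)
    * ∏ i ∈ Finset.Icc 1 (m - 1), ((q : ℚ) ^ (2 * i) - 1)

/-- `ω_{q²}(m) = ∏_{i=1}^m (1 − q^{-2i})`. -/
noncomputable def omegaQ2 (q : ℕ) (m : ℕ) : ℚ := ∏ i ∈ Finset.Icc 1 m, (1 - ((q : ℚ) ^ (2 * i))⁻¹)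

lemma prodA_pos (q : ℕ) (hq : 1 < q) (n : ℕ) :
    0 < ∏ i ∈ Finset.Icc 1 n, ((q : ℚ) ^ (2 * i) - 1) := by
  apply Finset.prod_pos
  intro i hi
  have hi1 : 1 ≤ i := (Finset.mem_Icc.mp hi).1
  have hQ : (1 : ℚ) < (q : ℚ) := by exact_mod_cast hq
  have : (1 : ℚ) < (q : ℚ) ^ (2 * i) := one_lt_pow₀ hQ (by omega)
  linarith

lemma omega_eq (q : ℕ) (hq : 1 < q) (m : ℕ) :
    omegaQ2 q m = (∏ i ∈ Finset.Icc 1 m, ((q : ℚ) ^ (2 * i) - 1)) / (q : ℚ) ^ (m * (m + 1)) := by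
  have hQ0 : (q : ℚ) ≠ 0 := by positivity
  induction m with
  | zero => simp [omegaQ2]
  | succ n ih =>
    rw [omegaQ2, Finset.prod_Icc_succ_top (by omega), ← omegaQ2, ih,
      Finset.prod_Icc_succ_top (by omega)]
    have h1 : (1 : ℚ) - ((q : ℚ) ^ (2 * (n + 1)))⁻¹
        = ((q : ℚ) ^ (2 * (n + 1)) - 1) / (q : ℚ) ^ (2 * (n + 1)) := by
      field_simp
    rw [h1, div_mul_div_comm, ← pow_add]
    congr 1
    ring

set_option maxHeartbeats 2000000 in
/-- The number of nondegenerate `2m₁`-subspaces of type `σ₁` in an orthogonal space of type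
`ε` and dimension `2m₁+2m₂` over `F_q` is
`|GO^ε_{2m₁+2m₂}(q)| / (|GO^{σ₁}_{2m₁}(q)|·|GO^{εσ₁}_{2m₂}(q)|)`, and this quotient of orders
equals `q^{4m₁m₂}·((1+σ₁q^{-m₁})(1+εσ₁q^{-m₂})/(2(1+εq^{-m₁-m₂})))·
(ω_{q²}(m₁+m₂)/(ω_{q²}(m₁)ω_{q²}(m₂)))`. -/
theorem stmt19 (q : ℕ) (hq : 1 < q) (m₁ m₂ : ℕ) (h₁ : 1 ≤ m₁) (h₂ : 1 ≤ m₂)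
    (ε σ₁ : ℚ) (hε : ε = 1 ∨ ε = -1) (hσ₁ : σ₁ = 1 ∨ σ₁ = -1) :
    goOrder q (m₁ + m₂) ε / (goOrder q m₁ σ₁ * goOrder q m₂ (ε * σ₁))
      = (q : ℚ) ^ (4 * m₁ * m₂)
        * ((1 + σ₁ * ((q : ℚ) ^ m₁)⁻¹) * (1 + ε * σ₁ * ((q : ℚ) ^ m₂)⁻¹)
          / (2 * (1 + ε * ((q : ℚ) ^ (m₁ + m₂))⁻¹)))
        * (omegaQ2 q (m₁ + m₂) / (omegaQ2 q m₁ * omegaQ2 q m₂)) := by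
  obtain ⟨n₁, rfl⟩ : ∃ n, m₁ = n + 1 := ⟨m₁ - 1, by omega⟩
  obtain ⟨n₂, rfl⟩ : ∃ n, m₂ = n + 1 := ⟨m₂ - 1, by omega⟩
  have hQ : (1 : ℚ) < (q : ℚ) := by exact_mod_cast hq
  have hQ0 : (q : ℚ) ≠ 0 := by positivity
  have hpow : ∀ k : ℕ, 1 ≤ k → (1 : ℚ) < (q : ℚ) ^ k := fun k hk => one_lt_pow₀ hQ (by omega)
  have hsub : ∀ k : ℕ, 1 ≤ k → (q : ℚ) ^ k - 1 ≠ 0 := fun k hk => by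
    have := hpow k hk; intro h; linarith [sub_eq_zero.mp h]
  have haddne : ∀ k : ℕ, (q : ℚ) ^ k + 1 ≠ 0 := fun k => by positivity
  have hP1 := (prodA_pos q hq n₁).ne'
  have hP2 := (prodA_pos q hq n₂).ne'
  have hP := (prodA_pos q hq (n₁ + n₂ + 1)).ne'
  rw [omega_eq q hq, omega_eq q hq, omega_eq q hq]
  have e1 : n₁ + 1 + (n₂ + 1) = (n₁ + n₂ + 1) + 1 := by ring
  rw [e1]
  simp only [goOrder, Nat.add_sub_cancel]
  rw [Finset.prod_Icc_succ_top (Nat.le_add_left 1 n₁),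
    Finset.prod_Icc_succ_top (Nat.le_add_left 1 n₂),
    Finset.prod_Icc_succ_top (Nat.le_add_left 1 (n₁ + n₂ + 1))]
  have hs1 := hsub (2 * (n₁ + 1)) (by omega)
  have hs2 := hsub (2 * (n₂ + 1)) (by omega)
  have hs3 := hsub (2 * (n₁ + n₂ + 1 + 1)) (by omega)
  have hn1 := hsub (n₁ + 1) (by omega)
  have hn2 := hsub (n₂ + 1) (by omega)
  have hn3 := hsub (n₁ + n₂ + 1 + 1) (by omega)
  have ha1 := haddne (n₁ + 1)
  have ha2 := haddne (n₂ + 1)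
  have ha3 := haddne (n₁ + n₂ + 1 + 1)
  have k1 : ∀ k : ℕ, 1 + ((q : ℚ) ^ k)⁻¹ = ((q : ℚ) ^ k + 1) / (q : ℚ) ^ k := by
    intro k; field_simp
  have k2 : ∀ k : ℕ, 1 - ((q : ℚ) ^ k)⁻¹ = ((q : ℚ) ^ k - 1) / (q : ℚ) ^ k := by
    intro k; rw [eq_div_iff (by positivity)]; field_simp
  have hlt : ∀ a b : ℕ, a < b → (q : ℚ) ^ a < (q : ℚ) ^ b := fun a b h =>
    pow_lt_pow_right₀ hQ h
  rcases hε with rfl | rfl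
  · rcases hσ₁ with rfl | rfl <;>
      · norm_num
        simp only [k1, k2]
        field_simp
        ring
  · have hn3' : (q:ℚ) ^ (n₁ + n₂ + 1 + 1) + -1 ≠ 0 := by
      rwa [sub_eq_add_neg] at hn3
    rcases hσ₁ with rfl | rfl <;>
      · norm_num
        simp only [k1, k2]
        field_simp
        ring
end
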